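/- arXiv:2506.03414 — 2 statements merged into one kernel-verified Lean document; each statement's English description precedes it below -/
import Mathlib

section
/- Neyman–Pearson dominance of the model ROC: for a point process with integrable intensity λ : W → [0,∞) with ∫_W λ > 0, and any measurable covariate Z : W → ℝ, for every p ∈ [0,1], if A = {u : λ(u) > t} and B = {u : Z(u) > s} are level sets with |A| = |B| = p|W|, then ∫_A λ ≥ ∫_B λ; consequently the theoretical model-ROC R_{λ,λ}(p) = ∫_A λ / ∫_W λ dominates the theoretical covariate-ROC R_{Z,λ}(p) = ∫_B λ / ∫_W λ, and hence the model AUC is at least the covariate AUC. -/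
open MeasureTheory Set intervalIntegral
open scoped ENNReal

/-!
Neyman–Pearson: if `A = {t < λ}` and `B` have the same measure, then `B \ A` and `A \ B` have
the same measure too, and `λ ≤ t` on the first while `λ > t` on the second; so trading `B \ A`
for `A \ B` can only increase the mass of `λ`. For the AUC, both ROC curves are monotone in `p`
(upper level sets are nested, and a nested pair with the smaller set of larger measure agrees
a.e.), hence integrable on `[0, 1]`.
-/

section NeymanPearson

variable {W : Type*} [MeasurableSpace W] {μ : Measure W} [IsFiniteMeasure μ] {lam : W → ℝ}

theorem setIntegral_le_setIntegral_upperLevelSet (hlam_meas : Measurable lam)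
    (hlam_int : Integrable lam μ) (t : ℝ) {B : Set W} (hB : MeasurableSet B)
    (hAB : μ {u | t < lam u} = μ B) :
    ∫ u in B, lam u ∂μ ≤ ∫ u in {u | t < lam u}, lam u ∂μ := by
  set A : Set W := {u | t < lam u}
  have hA : MeasurableSet A := measurableSet_lt measurable_const hlam_meas
  have hsdiff : μ (B \ A) = μ (A \ B) :=
    measure_sdiff_symm hB.nullMeasurableSet hA.nullMeasurableSet hAB.symm (measure_ne_top μ _)
  have hle_off_A : ∫ u in B \ A, lam u ∂μ ≤ ∫ _ in B \ A, t ∂μ :=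
    setIntegral_mono_on hlam_int.integrableOn (integrableOn_const (measure_ne_top μ _))
      (hB.diff hA) fun u hu => not_lt.mp hu.2
  have hge_off_B : ∫ _ in A \ B, t ∂μ ≤ ∫ u in A \ B, lam u ∂μ :=
    setIntegral_mono_on (integrableOn_const (measure_ne_top μ _)) hlam_int.integrableOn
      (hA.diff hB) fun u hu => hu.1.le
  have hconst : ∫ _ in B \ A, t ∂μ = ∫ _ in A \ B, t ∂μ := by
    simp only [setIntegral_const, measureReal_def, hsdiff]
  calc ∫ u in B, lam u ∂μ = ∫ u in A ∩ B, lam u ∂μ + ∫ u in B \ A, lam u ∂μ := by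
        rw [inter_comm, integral_inter_add_sdiff hA hlam_int.integrableOn]
    _ ≤ ∫ u in A ∩ B, lam u ∂μ + ∫ u in A \ B, lam u ∂μ := by
        rw [hconst] at hle_off_A
        linarith
    _ = ∫ u in A, lam u ∂μ := integral_inter_add_sdiff hB hlam_int.integrableOn

theorem setIntegral_upperLevelSet_le_of_measure_le (hlam_nonneg : ∀ u, 0 ≤ lam u)
    (hlam_int : Integrable lam μ) {f : W → ℝ} (hf : Measurable f) {r s : ℝ}
    (hrs : μ {u | r < f u} ≤ μ {u | s < f u}) :
    ∫ u in {u | r < f u}, lam u ∂μ ≤ ∫ u in {u | s < f u}, lam u ∂μ := by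
  rcases le_total s r with h | h
  · exact setIntegral_mono_set hlam_int.integrableOn (ae_of_all _ hlam_nonneg)
      (Filter.Eventually.of_forall fun u hu => h.trans_lt hu)
  · have hae : {u | s < f u} =ᵐ[μ] {u | r < f u} :=
      ae_eq_of_subset_of_measure_ge (fun u hu => h.trans_lt hu) hrs
        (measurableSet_lt measurable_const hf).nullMeasurableSet (measure_ne_top μ _)
    exact (setIntegral_congr_set hae).ge

theorem monotoneOn_setIntegral_upperLevelSet (hlam_nonneg : ∀ u, 0 ≤ lam u)
    (hlam_int : Integrable lam μ) {f : W → ℝ} (hf : Measurable f) (thr : ℝ → ℝ)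
    (hlevel : ∀ p ∈ Icc (0 : ℝ) 1, μ {u | thr p < f u} = ENNReal.ofReal p * μ univ) :
    MonotoneOn (fun p => ∫ u in {u | thr p < f u}, lam u ∂μ) (Icc 0 1) := by
  intro p hp q hq hpq
  refine setIntegral_upperLevelSet_le_of_measure_le hlam_nonneg hlam_int hf ?_
  rw [hlevel p hp, hlevel q hq]
  gcongr

end NeymanPearson

theorem intervalIntegral_mono_of_monotoneOn {a b : ℝ} (hab : a ≤ b) {f g : ℝ → ℝ}
    (hf : MonotoneOn f (Icc a b)) (hg : MonotoneOn g (Icc a b))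
    (hfg : ∀ x ∈ Icc a b, f x ≤ g x) :
    ∫ x in a..b, f x ≤ ∫ x in a..b, g x := by
  rw [← uIcc_of_le hab] at hf hg
  exact integral_mono_on hab hf.intervalIntegrable hg.intervalIntegrable hfg

theorem model_roc_dominates_covariate_roc_general
    {W : Type*} [MeasurableSpace W] (μ : Measure W) [IsFiniteMeasure μ]
    (lam Z : W → ℝ) (hlam_meas : Measurable lam) (hZ_meas : Measurable Z)
    (hlam_nonneg : ∀ u, 0 ≤ lam u) (hlam_int : Integrable lam μ)
    (tfun sfun : ℝ → ℝ)
    (hlevel : ∀ p ∈ Set.Icc (0 : ℝ) 1,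
      μ {u | tfun p < lam u} = ENNReal.ofReal p * μ Set.univ ∧
      μ {u | sfun p < Z u} = ENNReal.ofReal p * μ Set.univ) :
    (∀ p ∈ Set.Icc (0 : ℝ) 1,
      ∫ u in {u | sfun p < Z u}, lam u ∂μ ≤ ∫ u in {u | tfun p < lam u}, lam u ∂μ) ∧
    (∀ p ∈ Set.Icc (0 : ℝ) 1,
      (∫ u in {u | sfun p < Z u}, lam u ∂μ) / (∫ u, lam u ∂μ) ≤
        (∫ u in {u | tfun p < lam u}, lam u ∂μ) / (∫ u, lam u ∂μ)) ∧
    (∫ p in (0 : ℝ)..1, (∫ u in {u | sfun p < Z u}, lam u ∂μ) / (∫ u, lam u ∂μ)) ≤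
      ∫ p in (0 : ℝ)..1, (∫ u in {u | tfun p < lam u}, lam u ∂μ) / (∫ u, lam u ∂μ) := by
  have hdiv : Monotone (· / ∫ u, lam u ∂μ) :=
    monotone_div_right_of_nonneg (integral_nonneg hlam_nonneg)
  have hmass : ∀ p ∈ Icc (0 : ℝ) 1,
      ∫ u in {u | sfun p < Z u}, lam u ∂μ ≤ ∫ u in {u | tfun p < lam u}, lam u ∂μ :=
    fun p hp => setIntegral_le_setIntegral_upperLevelSet hlam_meas hlam_int (tfun p)
      (measurableSet_lt measurable_const hZ_meas) ((hlevel p hp).1.trans (hlevel p hp).2.symm)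
  have hroc : ∀ p ∈ Icc (0 : ℝ) 1,
      (∫ u in {u | sfun p < Z u}, lam u ∂μ) / (∫ u, lam u ∂μ) ≤
        (∫ u in {u | tfun p < lam u}, lam u ∂μ) / (∫ u, lam u ∂μ) :=
    fun p hp => hdiv (hmass p hp)
  refine ⟨hmass, hroc, intervalIntegral_mono_of_monotoneOn zero_le_one ?_ ?_ hroc⟩
  · exact hdiv.comp_monotoneOn (monotoneOn_setIntegral_upperLevelSet hlam_nonneg hlam_int
      hZ_meas sfun fun p hp => (hlevel p hp).2)
  · exact hdiv.comp_monotoneOn (monotoneOn_setIntegral_upperLevelSet hlam_nonneg hlam_int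
      hlam_meas tfun fun p hp => (hlevel p hp).1)

/-- Neyman–Pearson dominance of the model ROC.  For an intensity
`λ ≥ 0` and any covariate `Z`, given thresholds `tfun p`, `sfun p` whose strict
upper level sets both occupy a fraction `p` of the domain, the mass of `λ` on
the level set of `λ` dominates that on the level set of `Z`; consequently the
theoretical model-ROC dominates the theoretical covariate-ROC pointwise, and
the model AUC is at least the covariate AUC. -/
theorem model_roc_dominates_covariate_roc
    {W : Type*} [MeasurableSpace W] (μ : Measure W) [IsFiniteMeasure μ]
    (hμ0 : 0 < μ Set.univ)
    (lam Z : W → ℝ) (hlam_meas : Measurable lam) (hZ_meas : Measurable Z)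
    (hlam_nonneg : ∀ u, 0 ≤ lam u) (hlam_int : Integrable lam μ)
    (hlam_pos : 0 < ∫ u, lam u ∂μ)
    (tfun sfun : ℝ → ℝ)
    (hlevel : ∀ p ∈ Set.Icc (0 : ℝ) 1,
      μ {u | tfun p < lam u} = ENNReal.ofReal p * μ Set.univ ∧
      μ {u | sfun p < Z u} = ENNReal.ofReal p * μ Set.univ) :
    (∀ p ∈ Set.Icc (0 : ℝ) 1,
      ∫ u in {u | sfun p < Z u}, lam u ∂μ ≤ ∫ u in {u | tfun p < lam u}, lam u ∂μ) ∧
    (∀ p ∈ Set.Icc (0 : ℝ) 1,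
      (∫ u in {u | sfun p < Z u}, lam u ∂μ) / (∫ u, lam u ∂μ) ≤
        (∫ u in {u | tfun p < lam u}, lam u ∂μ) / (∫ u, lam u ∂μ)) ∧
    (∫ p in (0 : ℝ)..1, (∫ u in {u | sfun p < Z u}, lam u ∂μ) / (∫ u, lam u ∂μ)) ≤
      ∫ p in (0 : ℝ)..1, (∫ u in {u | tfun p < lam u}, lam u ∂μ) / (∫ u, lam u ∂μ) :=
  model_roc_dominates_covariate_roc_general μ lam Z hlam_meas hZ_meas hlam_nonneg hlam_int tfun sfun
    hlevel
end

section
/- Derivative of the theoretical C-ROC: suppose the intensity satisfies λ(u) = ρ(Z(u)) for u ∈ W, FP(t) = |{u : Z(u) > t}|/|W| is differentiable with strictly negative derivative, and ρ is continuous. Then the theoretical ROC curve R(p) = TP(FP⁻¹(p)), with TP(t) = ∫_W 1{Z(u) > t} λ(u) du / ∫_W λ(u) du, is differentiable with R′(p) = ρ(FP⁻¹(p))/κ, where κ = (∫_W λ(u) du)/|W|. In particular R(p) = (1/κ)∫₀^p ρ(FP⁻¹(v)) dv. -/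
open MeasureTheory Set intervalIntegral

noncomputable def spatFP {W : Type*} [MeasurableSpace W] (μ : Measure W) (Z : W → ℝ)
    (t : ℝ) : ℝ :=
  (μ {u | t < Z u}).toReal / (μ Set.univ).toReal

/-- Theoretical true positive rate for intensity `λ(u) = ρ(Z(u))`. -/
noncomputable def theoTP {W : Type*} [MeasurableSpace W] (μ : Measure W)
    (Z : W → ℝ) (ρ : ℝ → ℝ) (t : ℝ) : ℝ :=
  (∫ u in {u | t < Z u}, ρ (Z u) ∂μ) / ∫ u, ρ (Z u) ∂μ

/-!
Push `μ` forward along `Z` to a finite measure `ν` on `ℝ`: then `TP(t) · ∫ λ = ∫_{(t,∞)} ρ dν` and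
`|W| · FP(t) = ν (t,∞)`. Continuity of `ρ` gives `∫_{(s,t]} ρ dν = (ρ t + o(1)) · ν (s,t]` as
`s → t`, i.e. the tail integral is differentiable with respect to the tail mass, with derivative
`ρ t`. Composing with the continuous inverse `FP⁻¹` gives `R′(p) = |W| ρ(FP⁻¹ p) / ∫ λ`. The
integral formula is the fundamental theorem of calculus on `(0, p]`: `R′ ≥ 0` makes it integrable,
and `R q → 0` as `q → 0⁺` because `FP⁻¹ q → ∞`.
-/

open Filter Topology Asymptotics
open scoped Interval

theorem StrictAnti.continuousAt_of_rightInverse {g h : ℝ → ℝ} {p : ℝ} (hg : StrictAnti g)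
    (hgc : Continuous g) (hgh : ∀ᶠ q in 𝓝 p, g (h q) = q) : ContinuousAt h p := by
  have hemb : Topology.IsEmbedding (OrderDual.toDual ∘ g) :=
    hg.dual_right.isEmbedding_of_ordConnected
      (isPreconnected_range (continuous_toDual.comp hgc)).ordConnected
  rw [hemb.isInducing.continuousAt_iff]
  exact continuous_toDual.continuousAt.congr (by
    filter_upwards [hgh] with q hq
    simp [hq])

theorem hasDerivAt_comp_of_isLittleO_sub {f g h : ℝ → ℝ} {a p : ℝ}
    (hfg : (fun y => f y - f (h p) - a * (g y - g (h p))) =o[𝓝 (h p)] fun y => g y - g (h p))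
    (hh : ContinuousAt h p) (hgh : ∀ᶠ q in 𝓝 p, g (h q) = q) : HasDerivAt (f ∘ h) a p := by
  have hp : g (h p) = p := hgh.self_of_nhds
  rw [hasDerivAt_iff_isLittleO]
  refine (hfg.comp_tendsto hh).congr' ?_ ?_
  · filter_upwards [hgh] with q hq
    simp only [Function.comp_apply, hq, hp, smul_eq_mul]
    ring
  · filter_upwards [hgh] with q hq
    simp only [Function.comp_apply, hq, hp]

theorem tendsto_setIntegral_Ioi_atTop_zero {ν : Measure ℝ} {f : ℝ → ℝ} (hf : Integrable f ν) :
    Tendsto (fun t => ∫ x in Ioi t, f x ∂ν) atTop (𝓝 0) := by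
  have h := (intervalIntegral_tendsto_integral_Ioi 0 hf.integrableOn tendsto_id).const_sub
    (∫ x in Ioi 0, f x ∂ν)
  rw [sub_self] at h
  refine h.congr fun t => ?_
  rw [id, ← integral_Ioi_sub_Ioi' hf.integrableOn hf.integrableOn, sub_sub_cancel]

theorem tendsto_nhdsGT_zero_atTop_of_rightInverse {g h : ℝ → ℝ} (hg : StrictAnti g)
    (hg0 : ∀ t, 0 ≤ g t) (hgh : ∀ᶠ q in 𝓝[>] 0, g (h q) = q) :
    Tendsto h (𝓝[>] 0) atTop := by
  refine tendsto_atTop.2 fun M => ?_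
  have hM : 0 < g M := (hg0 (M + 1)).trans_lt (hg (lt_add_one M))
  filter_upwards [hgh, (nhdsWithin_le_nhds : 𝓝[>] (0:ℝ) ≤ 𝓝 0) (Iio_mem_nhds hM)] with q hq hqM
  exact (hg.lt_iff_gt.1 (hq.symm ▸ hqM : g (h q) < g M)).le

theorem isLittleO_setIntegral_Ioi_sub {ν : Measure ℝ} [IsFiniteMeasure ν] {ρ : ℝ → ℝ}
    (hρ : Continuous ρ) (hint : Integrable ρ ν) (t : ℝ) :
    (fun s => (∫ x in Ioi s, ρ x ∂ν) - (∫ x in Ioi t, ρ x ∂ν)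
        - ρ t * (ν.real (Ioi s) - ν.real (Ioi t))) =o[𝓝 t]
      fun s => ν.real (Ioi s) - ν.real (Ioi t) := by
  have hmass : ∀ s, ν.real (Ioi s) - ν.real (Ioi t) = ∫ x in s..t, (1 : ℝ) ∂ν := fun s => by
    simpa using integral_Ioi_sub_Ioi' (integrable_const (1 : ℝ)).integrableOn
      (integrable_const (1 : ℝ)).integrableOn (μ := ν) (a := s) (b := t)
  have hnorm_mass : ∀ s, ‖ν.real (Ioi s) - ν.real (Ioi t)‖ = ν.real (Ι s t) := fun s => by
    rw [hmass, norm_integral_eq_norm_integral_uIoc, setIntegral_const, smul_eq_mul, mul_one,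
      Real.norm_of_nonneg measureReal_nonneg]
  have hdiff : ∀ s, (∫ x in Ioi s, ρ x ∂ν) - (∫ x in Ioi t, ρ x ∂ν)
      - ρ t * (ν.real (Ioi s) - ν.real (Ioi t)) = ∫ x in s..t, (ρ x - ρ t) ∂ν := fun s => by
    rw [integral_Ioi_sub_Ioi' hint.integrableOn hint.integrableOn, hmass,
      intervalIntegral.integral_sub hint.intervalIntegrable intervalIntegrable_const,
      ← intervalIntegral.integral_const_mul, mul_one]
  refine IsLittleO.of_bound fun ε hε => ?_
  obtain ⟨δ, hδ, hρδ⟩ := Metric.continuous_iff.1 hρ t ε hε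
  filter_upwards [Metric.ball_mem_nhds t hδ] with s hs
  rw [hdiff, hnorm_mass, norm_integral_eq_norm_integral_uIoc]
  refine norm_setIntegral_le_of_norm_le_const (f := fun x => ρ x - ρ t) (measure_lt_top ν _)
    fun x hx => ?_
  exact (hρδ x ((Real.dist_le_of_mem_uIcc (uIoc_subset_uIcc hx) right_mem_uIcc).trans_lt hs)).le

theorem integral_eq_sub_of_hasDerivAt_of_tendsto_of_nonneg {f f' : ℝ → ℝ} {a b fa : ℝ}
    (hab : a < b) (hderiv : ∀ x ∈ Ioc a b, HasDerivAt f (f' x) x)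
    (hf' : ∀ x ∈ Ioo a b, 0 ≤ f' x) (ha : Tendsto f (𝓝[>] a) (𝓝 fa)) :
    ∫ y in a..b, f' y = f b - fa := by
  classical
  set F : ℝ → ℝ := Function.update f a fa
  have hFf : ∀ x ∈ Ioc a b, F x = f x := fun x hx => Function.update_of_ne hx.1.ne' _ _
  have hFderiv : ∀ x ∈ Ioo a b, HasDerivAt F (f' x) x := fun x hx =>
    (hderiv x (Ioo_subset_Ioc_self hx)).congr_of_eventuallyEq <| by
      filter_upwards [Ioo_mem_nhds hx.1 hx.2] with y hy using hFf y (Ioo_subset_Ioc_self hy)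
  have hcont : ContinuousOn F (Icc a b) := by
    rw [continuousOn_update_iff, Icc_sdiff_left]
    refine ⟨fun x hx => (hderiv x hx).continuousAt.continuousWithinAt, fun _ => ?_⟩
    exact ha.mono_left (nhdsWithin_mono _ Ioc_subset_Ioi_self)
  rw [integral_eq_sub_of_hasDerivAt_of_le hab.le hcont hFderiv
    ((intervalIntegrable_iff_integrableOn_Ioc_of_le hab.le).2
      (integrableOn_deriv_of_nonneg hcont hFderiv hf')),
    hFf b (right_mem_Ioc.2 hab)]
  simp only [F, Function.update_self]

theorem hasDerivAt_setIntegral_Ioi_comp_rightInverse {ν : Measure ℝ} [IsFiniteMeasure ν]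
    {ρ F h : ℝ → ℝ} {c p : ℝ} (hρ : Continuous ρ) (hint : Integrable ρ ν) (hF : StrictAnti F)
    (hFc : Continuous F) (hmass : ∀ s, ν.real (Ioi s) = c * F s)
    (hFh : ∀ᶠ q in 𝓝 p, F (h q) = q) :
    HasDerivAt (fun q => ∫ x in Ioi (h q), ρ x ∂ν) (c * ρ (h p)) p := by
  have hlo := isLittleO_setIntegral_Ioi_sub hρ hint (h p)
  simp only [hmass, ← mul_sub] at hlo
  refine hasDerivAt_comp_of_isLittleO_sub (f := fun s => ∫ x in Ioi s, ρ x ∂ν)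
    (hlo.of_const_mul_right.congr_left fun s => by ring)
    (hF.continuousAt_of_rightInverse hFc hFh) hFh

theorem theo_roc_deriv_general
    {W : Type*} [MeasurableSpace W] (μ : Measure W) [IsFiniteMeasure μ]
    (hμ0 : 0 < μ Set.univ)
    (Z : W → ℝ) (hZ : Measurable Z)
    (ρ : ℝ → ℝ) (hρ_cont : Continuous ρ) (hρ_nonneg : ∀ z, 0 ≤ ρ z)
    (hint : Integrable (fun u => ρ (Z u)) μ)
    (FP' : ℝ → ℝ)
    (hFP_deriv : ∀ t, HasDerivAt (spatFP μ Z) (FP' t) t)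
    (hFP'_neg : ∀ t, FP' t < 0)
    (FPinv : ℝ → ℝ)
    (hinv : ∀ p ∈ Set.Ioo (0 : ℝ) 1, spatFP μ Z (FPinv p) = p) :
    (∀ p ∈ Set.Ioo (0 : ℝ) 1,
      HasDerivAt (fun q => theoTP μ Z ρ (FPinv q))
        (ρ (FPinv p) / ((∫ u, ρ (Z u) ∂μ) / (μ Set.univ).toReal)) p) ∧
    (∀ p ∈ Set.Ioo (0 : ℝ) 1,
      theoTP μ Z ρ (FPinv p) =
        (1 / ((∫ u, ρ (Z u) ∂μ) / (μ Set.univ).toReal)) *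
          ∫ v in (0 : ℝ)..p, ρ (FPinv v)) := by
  set c := (μ Set.univ).toReal
  set ν := μ.map Z
  have hc : 0 < c := ENNReal.toReal_pos hμ0.ne' (measure_ne_top μ _)
  have hνint : Integrable ρ ν :=
    (integrable_map_measure hρ_cont.aestronglyMeasurable hZ.aemeasurable).2 hint
  have hTP : ∀ q, theoTP μ Z ρ (FPinv q) = (∫ x in Ioi (FPinv q), ρ x ∂ν) / ∫ u, ρ (Z u) ∂μ :=
    fun q => by
      rw [theoTP, setIntegral_map measurableSet_Ioi hρ_cont.aestronglyMeasurable hZ.aemeasurable]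
      rfl
  have hmass : ∀ t, ν.real (Ioi t) = c * spatFP μ Z t := fun t => by
    rw [map_measureReal_apply hZ measurableSet_Ioi, spatFP, mul_div_cancel₀ _ hc.ne']
    rfl
  have hanti : StrictAnti (spatFP μ Z) := strictAnti_of_hasDerivAt_neg hFP_deriv hFP'_neg
  have hcont : Continuous (spatFP μ Z) :=
    continuous_iff_continuousAt.2 fun t => (hFP_deriv t).continuousAt
  have hderiv : ∀ p ∈ Ioo (0 : ℝ) 1,
      HasDerivAt (fun q => ∫ x in Ioi (FPinv q), ρ x ∂ν) (c * ρ (FPinv p)) p := fun p hp =>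
    hasDerivAt_setIntegral_Ioi_comp_rightInverse hρ_cont hνint hanti hcont hmass
      (eventually_of_mem (isOpen_Ioo.mem_nhds hp) hinv)
  have htail : Tendsto (fun q => ∫ x in Ioi (FPinv q), ρ x ∂ν) (𝓝[>] 0) (𝓝 0) :=
    (tendsto_setIntegral_Ioi_atTop_zero hνint).comp <|
      tendsto_nhdsGT_zero_atTop_of_rightInverse hanti (fun t => by unfold spatFP; positivity)
        (eventually_of_mem (Ioo_mem_nhdsGT zero_lt_one) hinv)
  refine ⟨fun p hp => ?_, fun p hp => ?_⟩
  · rw [div_div_eq_mul_div, mul_comm]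
    simp_rw [hTP]
    exact (hderiv p hp).div_const _
  · have hFTC := integral_eq_sub_of_hasDerivAt_of_tendsto_of_nonneg hp.1
      (fun x hx => hderiv x ⟨hx.1, hx.2.trans_lt hp.2⟩)
      (fun x _ => mul_nonneg hc.le (hρ_nonneg _)) htail
    rw [intervalIntegral.integral_const_mul, sub_zero] at hFTC
    rw [hTP, ← hFTC]
    field_simp

/-- derivative of the theoretical C-ROC.  If the intensity is
`λ(u) = ρ(Z(u))` with `ρ` continuous, and `FP` is differentiable with strictly
negative derivative and (two-sided) inverse `FPinv`, then the theoretical ROC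
curve `R(p) = TP(FP⁻¹(p))` is differentiable with `R′(p) = ρ(FP⁻¹(p))/κ`,
where `κ = (∫_W ρ(Z(u)) du)/|W|`; in particular
`R(p) = (1/κ)·∫₀^p ρ(FP⁻¹(v)) dv`. -/
theorem theo_roc_deriv
    {W : Type*} [MeasurableSpace W] (μ : Measure W) [IsFiniteMeasure μ]
    (hμ0 : 0 < μ Set.univ)
    (Z : W → ℝ) (hZ : Measurable Z)
    (ρ : ℝ → ℝ) (hρ_cont : Continuous ρ) (hρ_nonneg : ∀ z, 0 ≤ ρ z)
    (hint : Integrable (fun u => ρ (Z u)) μ)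
    (hpos : 0 < ∫ u, ρ (Z u) ∂μ)
    (FP' : ℝ → ℝ)
    (hFP_deriv : ∀ t, HasDerivAt (spatFP μ Z) (FP' t) t)
    (hFP'_neg : ∀ t, FP' t < 0)
    (FPinv : ℝ → ℝ)
    (hinv : ∀ p ∈ Set.Ioo (0 : ℝ) 1, spatFP μ Z (FPinv p) = p)
    (hinv' : ∀ t, FPinv (spatFP μ Z t) = t) :
    (∀ p ∈ Set.Ioo (0 : ℝ) 1,
      HasDerivAt (fun q => theoTP μ Z ρ (FPinv q))
        (ρ (FPinv p) / ((∫ u, ρ (Z u) ∂μ) / (μ Set.univ).toReal)) p) ∧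
    (∀ p ∈ Set.Ioo (0 : ℝ) 1,
      theoTP μ Z ρ (FPinv p) =
        (1 / ((∫ u, ρ (Z u) ∂μ) / (μ Set.univ).toReal)) *
          ∫ v in (0 : ℝ)..p, ρ (FPinv v)) :=
  theo_roc_deriv_general μ hμ0 Z hZ ρ hρ_cont hρ_nonneg hint FP' hFP_deriv hFP'_neg FPinv hinv
end
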